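/- arXiv:2409.00394 — 2 statements merged into one kernel-verified Lean document; each statement's English description precedes it below -/
import Mathlib

section
/- If for every integer v with 1 ≤ v ≤ y there exists a prime p ≤ x and a residue h_p such that v ≡ h_p (mod p), and m₀ satisfies m₀ ≡ -h_p (mod p) for each such prime p, then every integer w with m₀ < w < m₀ + y that exceeds x is divisible by some prime p ≤ x strictly smaller than w, hence is composite. -/
theorem erdos_rankin_covering (x y : ℕ) (h : ℕ → ℤ) (m₀ : ℤ)
    (hcover : ∀ v : ℤ, 1 ≤ v → v ≤ (y : ℤ) →
      ∃ p : ℕ, p.Prime ∧ p ≤ x ∧ v ≡ h p [ZMOD (p : ℤ)])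
    (hm₀ : ∀ p : ℕ, p.Prime → p ≤ x → m₀ ≡ -h p [ZMOD (p : ℤ)]) :
    ∀ w : ℤ, m₀ < w → w < m₀ + (y : ℤ) → (x : ℤ) < w →
      ∃ p : ℕ, p.Prime ∧ p ≤ x ∧ (p : ℤ) < w ∧ (p : ℤ) ∣ w := by
  intro w hw1 hw2 hw3
  obtain ⟨p, hp, hpx, hmod⟩ := hcover (w - m₀) (by omega) (by omega)
  refine ⟨p, hp, hpx, ?_, ?_⟩
  · have : (p : ℤ) ≤ x := by exact_mod_cast hpx
    omega
  · have h2 := (hm₀ p hp hpx).add hmod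
    have : m₀ + (w - m₀) ≡ 0 [ZMOD (p : ℤ)] := by
      simpa using h2
    simpa using (Int.ModEq.dvd this.symm)
end

section
/- Under the sieve hypotheses (Ω₁) and (Ω₂) with κ > 0, the product W(z) = ∏_{p < z, p ∈ 𝒫} (1 - ζ(p)/p) satisfies W(z')/W(z) ≤ C (log z / log z')^κ for 2 ≤ z' < z, for a constant C depending only on κ, A₁, A₂. -/
set_option maxHeartbeats 1000000

lemma abel_identity (a b : ℕ → ℝ) (N : ℕ) :
    ∑ n ∈ Finset.range N, a n * b n =
      (∑ n ∈ Finset.range N, (∑ k ∈ Finset.range (n+1), a k) * (b n - b (n+1)))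
        + (∑ k ∈ Finset.range N, a k) * b N := by
  induction N with
  | zero => simp
  | succ n ih =>
    rw [Finset.sum_range_succ, ih,
      Finset.sum_range_succ (f := fun m => (∑ k ∈ Finset.range (m+1), a k) * (b m - b (m+1))),
      Finset.sum_range_succ a]
    ring

lemma log_nat_mono {m n : ℕ} (h : m ≤ n) : Real.log m ≤ Real.log n := by
  rcases Nat.eq_zero_or_pos m with hm | hm
  · subst hm; simp
    rcases Nat.eq_zero_or_pos n with hn | hn
    · simp [hn]
    · exact Real.log_natCast_nonneg n
  · exact Real.log_le_log (by exact_mod_cast hm) (by exact_mod_cast h)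

lemma one_sub_div_le_log_sub (s t : ℝ) (hs : 0 < s) (hst : s ≤ t) :
    1 - s / t ≤ Real.log t - Real.log s := by
  have ht : 0 < t := lt_of_lt_of_le hs hst
  have h := Real.log_le_sub_one_of_pos (show 0 < s / t by positivity)
  rw [Real.log_div (ne_of_gt hs) (ne_of_gt ht)] at h
  linarith

lemma per1' (κ B v s t : ℝ) (hκ : 0 ≤ κ) (hB : 0 ≤ B) (hv : 0 < v) (hvs : v ≤ s)
    (hst : s ≤ t) :
    (κ * (s - v) + B) * (1/s - 1/t) ≤
      κ * ((Real.log t + v * (1/t)) - (Real.log s + v * (1/s))) + B * (1/s - 1/t) := by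
  have hs : 0 < s := lt_of_lt_of_le hv hvs
  have ht : 0 < t := lt_of_lt_of_le hs hst
  have key := one_sub_div_le_log_sub s t hs hst
  have e1 : s * (1/s - 1/t) = 1 - s/t := by
    rw [mul_sub, mul_one_div, mul_one_div, div_self (ne_of_gt hs)]
  have key2 : (s - v) * (1/s - 1/t) ≤ (Real.log t - Real.log s) + v * (1/t - 1/s) := by
    nlinarith [key, e1]
  nlinarith [mul_le_mul_of_nonneg_left key2 hκ]

lemma per2' (κ B v s t : ℝ) (hκ : 0 ≤ κ) (hB : 0 ≤ B) (hv : 0 < v) (hvs : v ≤ s)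
    (hst : s ≤ t) :
    (κ * (s - v) + B) * ((1/s)^2 - (1/t)^2) ≤
      2*κ * (1/s - 1/t) + B * ((1/s)^2 - (1/t)^2) := by
  have hs : 0 < s := lt_of_lt_of_le hv hvs
  have ht : 0 < t := lt_of_lt_of_le hs hst
  have hu : 1/t ≤ 1/s := one_div_le_one_div_of_le hs hst
  have hup : 0 < 1/t := by positivity
  have e : s * (1/s) = 1 := by field_simp
  have k1 : (2*(1/t) - 1/s) * (1/s) ≤ (1/t)^2 := by nlinarith [sq_nonneg (1/s - 1/t)]
  have k2 := mul_le_mul_of_nonneg_left k1 (le_of_lt hs)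
  have k3 : s * ((2*(1/t) - 1/s) * (1/s)) = (s * (1/s)) * (2*(1/t) - 1/s) := by ring
  rw [k3, e, one_mul] at k2
  have e2 : s * (1/s)^2 = 1/s := by rw [sq, ← mul_assoc, e, one_mul]
  have step1 : s * ((1/s)^2 - (1/t)^2) ≤ 2*(1/s - 1/t) := by
    have expand : s * ((1/s)^2 - (1/t)^2) = s * (1/s)^2 - s * (1/t)^2 := by ring
    rw [expand, e2]
    linarith
  have step2 : (s - v) * ((1/s)^2 - (1/t)^2) ≤ s * ((1/s)^2 - (1/t)^2) := by
    nlinarith [mul_nonneg (le_of_lt hv) (sub_nonneg.mpr (pow_le_pow_left₀ (le_of_lt hup) hu 2))]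
  nlinarith [mul_le_mul_of_nonneg_left (le_trans step2 step1) hκ]

lemma bnd1 (κ B v s : ℝ) (hv : 0 < v) (hvs : v ≤ s) :
    (κ * (s - v) + B) * (1/s) = κ * (1 - v * (1/s)) + B * (1/s) := by
  have hs : 0 < s := lt_of_lt_of_le hv hvs
  have e : s * (1/s) = 1 := by field_simp
  linear_combination κ * e

lemma bnd2 (κ B v s : ℝ) (hκ : 0 ≤ κ) (hB : 0 ≤ B) (hv : 0 < v) (hvs : v ≤ s)
    (hs2 : 1/s ≤ 2) :
    (κ * (s - v) + B) * (1/s)^2 ≤ 2*κ + 4*B := by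
  have hs : 0 < s := lt_of_lt_of_le hv hvs
  have hup : (0:ℝ) < 1/s := by positivity
  have e : s * (1/s) = 1 := by field_simp
  have e2 : s * (1/s)^2 = 1/s := by rw [sq, ← mul_assoc, e, one_mul]
  have h1 : (κ * (s - v) + B) * (1/s)^2
      = κ * (s * (1/s)^2) - κ * (v * (1/s)^2) + B * (1/s)^2 := by ring
  rw [e2] at h1
  have h2 : 0 ≤ v * (1/s)^2 := by positivity
  have h3 : (1/s)^2 ≤ 4 := by nlinarith
  nlinarith [mul_le_mul_of_nonneg_left hs2 hκ, mul_le_mul_of_nonneg_left h3 hB,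
    mul_le_mul_of_nonneg_left h2 hκ]

lemma exp_bound_quad (A x : ℝ) (hA : 1 ≤ A) (hx0 : 0 ≤ x) (hx1 : x ≤ 1 - 1/A) :
    Real.exp (-(x + A * x^2)) ≤ 1 - x := by
  have hApos : (0:ℝ) < A := by linarith
  have h1x : 1/A ≤ 1 - x := by linarith
  have h1xpos : 0 < 1 - x := lt_of_lt_of_le (by positivity) h1x
  have hinvA : (1 - x)⁻¹ ≤ A := by
    have h2 : A⁻¹ ≤ 1 - x := by rw [← one_div]; exact h1x
    have h3 := inv_anti₀ (by positivity) h2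
    rwa [inv_inv] at h3
  have hli : -Real.log (1 - x) ≤ (1 - x)⁻¹ - 1 := by
    rw [← Real.log_inv]
    exact Real.log_le_sub_one_of_pos (by positivity)
  have e2 : (1 - x)⁻¹ - 1 = x + x^2 * (1 - x)⁻¹ := by
    field_simp
    ring
  have h4 : x^2 * (1 - x)⁻¹ ≤ x^2 * A := mul_le_mul_of_nonneg_left hinvA (sq_nonneg _)
  have h5 : -(x + A * x^2) ≤ Real.log (1 - x) := by nlinarith
  calc Real.exp (-(x + A * x^2)) ≤ Real.exp (Real.log (1 - x)) := Real.exp_le_exp.mpr h5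
    _ = 1 - x := Real.exp_log h1xpos

lemma density_sq (Bc lg x : ℝ) (hlg : 0 < lg) (hx0 : 0 ≤ x) (hxl : x * lg ≤ Bc) :
    x^2 ≤ Bc * (x * (1/lg)) := by
  have h2 : x^2 * lg ≤ Bc * x := by nlinarith [mul_le_mul_of_nonneg_left hxl hx0]
  calc x^2 = (x^2 * lg) * (1/lg) := by field_simp
    _ ≤ (Bc * x) * (1/lg) := mul_le_mul_of_nonneg_right h2 (by positivity)
    _ = Bc * (x * (1/lg)) := by ring

open Classical in
theorem sieve_density_comparison (κ A₁ A₂ : ℝ) (hκ : 0 < κ) (hA₁ : 1 ≤ A₁) (hA₂ : 1 ≤ A₂) :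
    ∃ C : ℝ, 0 < C ∧
      ∀ (P : Set ℕ) (ζ : ℕ → ℝ),
        (∀ p : ℕ, p.Prime → p ∉ P → ζ p = 0) →
        (∀ p : ℕ, p.Prime → p ∈ P → 0 ≤ ζ p / p ∧ ζ p / p ≤ 1 - 1 / A₁) →
        (∀ z' z : ℝ, 2 ≤ z' → z' < z →
          (∑ p ∈ Finset.range ⌈z⌉₊,
              if p.Prime ∧ z' ≤ (p : ℝ) ∧ (p : ℝ) < z then ζ p * Real.log p / p else 0) ≤
            κ * Real.log (z / z') + A₂) →
        ∀ z' z : ℝ, 2 ≤ z' → z' < z →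
          (∏ p ∈ Finset.range ⌈z'⌉₊,
              if p.Prime ∧ (p : ℝ) < z' ∧ p ∈ P then (1 - ζ p / p) else 1) ≤
            C * (Real.log z / Real.log z') ^ κ *
              ∏ p ∈ Finset.range ⌈z⌉₊,
                if p.Prime ∧ (p : ℝ) < z ∧ p ∈ P then (1 - ζ p / p) else 1 := by
  classical
  obtain ⟨B, hB⟩ : ∃ x : ℝ, x = κ + A₂ := ⟨_, rfl⟩
  have hBpos : 0 < B := by rw [hB]; positivity
  obtain ⟨D, hD⟩ : ∃ x : ℝ, x = κ * Real.log 2 + 2 * B + A₁ * B * (6 * κ + 8 * B) :=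
    ⟨_, rfl⟩
  refine ⟨Real.exp D, Real.exp_pos _, ?_⟩
  intro P ζ hζP hΩ1 hΩ2 z' z hz2 hzz
  have hz'pos : (0:ℝ) < z' := by linarith
  have hzpos : (0:ℝ) < z := by linarith
  obtain ⟨v', hv'⟩ : ∃ x : ℝ, x = Real.log z' := ⟨_, rfl⟩
  obtain ⟨V, hV⟩ : ∃ x : ℝ, x = Real.log z := ⟨_, rfl⟩
  rw [← hv', ← hV]
  have hlog2 : (0.6931471803 : ℝ) < Real.log 2 := Real.log_two_gt_d9
  have hv'2 : Real.log 2 ≤ v' := by rw [hv']; exact Real.log_le_log (by norm_num) hz2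
  have hv'pos : 0 < v' := by linarith
  have hVv' : v' < V := by rw [hv', hV]; exact Real.log_lt_log hz'pos hzz
  have hVpos : 0 < V := lt_trans hv'pos hVv'
  have hinv2 : 1 / v' ≤ 2 := by
    rw [div_le_iff₀ hv'pos]; linarith
  -- bounds on ζ p / p for all primes
  have hx : ∀ p : ℕ, p.Prime → 0 ≤ ζ p / p ∧ ζ p / p ≤ 1 - 1 / A₁ := by
    intro p hp
    by_cases hpP : p ∈ P
    · exact hΩ1 p hp hpP
    · rw [hζP p hp hpP]
      have h1 : 1/A₁ ≤ 1 := by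
        rw [div_le_one (by linarith)]; linarith
      simp only [zero_div]
      exact ⟨le_rfl, by linarith⟩
  -- nonnegativity of prime terms
  have hterm : ∀ k : ℕ, k.Prime → 0 ≤ ζ k * Real.log k / k := by
    intro k hk
    rw [mul_div_right_comm]
    exact mul_nonneg (hx k hk).1 (Real.log_natCast_nonneg k)
  -- definitions
  obtain ⟨N, hNdef⟩ : ∃ n : ℕ, n = ⌈z⌉₊ := ⟨_, rfl⟩
  rw [← hNdef]
  have hN0 : 0 < N := by rw [hNdef]; exact Nat.ceil_pos.2 hzpos
  obtain ⟨a, hadef⟩ : ∃ f : ℕ → ℝ,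
    f = fun n : ℕ => if n.Prime ∧ z' ≤ (n:ℝ) ∧ (n:ℝ) < z then ζ n * Real.log n / n else 0 :=
    ⟨_, rfl⟩
  have haval : ∀ n : ℕ,
      a n = if n.Prime ∧ z' ≤ (n:ℝ) ∧ (n:ℝ) < z then ζ n * Real.log n / n else 0 := by
    intro n; rw [hadef]
  obtain ⟨L, hLdef⟩ : ∃ f : ℕ → ℝ, f = fun n : ℕ => max (Real.log n) v' := ⟨_, rfl⟩
  have hLval : ∀ n : ℕ, L n = max (Real.log n) v' := by intro n; rw [hLdef]
  obtain ⟨b, hbdef⟩ : ∃ f : ℕ → ℝ, f = fun n => 1 / L n := ⟨_, rfl⟩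
  have hbval : ∀ n : ℕ, b n = 1 / L n := by intro n; rw [hbdef]
  have ha0 : ∀ n, 0 ≤ a n := by
    intro n
    rw [haval]
    split_ifs with h
    · exact hterm n h.1
    · exact le_rfl
  have hLv' : ∀ n, v' ≤ L n := by intro n; rw [hLval]; exact le_max_right _ _
  have hLlog : ∀ n : ℕ, Real.log n ≤ L n := by intro n; rw [hLval]; exact le_max_left _ _
  have hLpos : ∀ n, 0 < L n := fun n => lt_of_lt_of_le hv'pos (hLv' n)
  have hLmono : ∀ m n : ℕ, m ≤ n → L m ≤ L n := by
    intro m n h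
    rw [hLval, hLval]
    exact max_le_max (log_nat_mono h) le_rfl
  have hbpos : ∀ n, 0 < b n := by
    intro n; rw [hbval]
    have := hLpos n
    positivity
  have hbanti : ∀ n, b (n+1) ≤ b n := by
    intro n
    rw [hbval, hbval]
    exact one_div_le_one_div_of_le (hLpos n) (hLmono n (n+1) (Nat.le_succ n))
  have hble : ∀ n, b n ≤ 2 := by
    intro n
    rw [hbval]
    calc 1 / L n ≤ 1 / v' := one_div_le_one_div_of_le hv'pos (hLv' n)
      _ ≤ 2 := hinv2
  have hLb : ∀ n, L n * b n = 1 := by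
    intro n
    rw [hbval]
    field_simp [ne_of_gt (hLpos n)]
  -- single prime bound
  have haB : ∀ p : ℕ, p.Prime → ζ p * Real.log p / p ≤ B := by
    intro p hp
    have hp2 : (2:ℝ) ≤ p := by exact_mod_cast hp.two_le
    have hppos : (0:ℝ) < p := by linarith
    have hceil : ⌈(p:ℝ) + 1/2⌉₊ = p + 1 := by
      rw [Nat.ceil_eq_iff (by omega)]
      constructor
      · push_cast; linarith
      · push_cast; linarith
    have h2 := hΩ2 p ((p:ℝ) + 1/2) hp2 (by linarith)
    rw [hceil] at h2
    have hsum : (∑ q ∈ Finset.range (p+1),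
        if q.Prime ∧ (p:ℝ) ≤ (q:ℝ) ∧ (q:ℝ) < (p:ℝ)+1/2 then ζ q * Real.log q / q else 0)
        = ζ p * Real.log p / p := by
      rw [Finset.sum_eq_single_of_mem p (Finset.self_mem_range_succ p)]
      · rw [if_pos ⟨hp, le_refl _, by linarith⟩]
      · intro q hq hqp
        rw [if_neg]
        rintro ⟨-, hq1, hq2⟩
        have h1 : p ≤ q := by exact_mod_cast hq1
        have h2 : q < p + 1 := Finset.mem_range.mp hq
        omega
    rw [hsum] at h2
    have hlogle : Real.log (((p:ℝ)+1/2)/p) ≤ 1 := by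
      have hle : ((p:ℝ)+1/2)/p ≤ Real.exp 1 := by
        rw [div_le_iff₀ hppos]
        have := Real.add_one_le_exp 1
        nlinarith
      calc Real.log (((p:ℝ)+1/2)/p) ≤ Real.log (Real.exp 1) :=
            Real.log_le_log (by positivity) hle
        _ = 1 := Real.log_exp 1
    have h3 := mul_le_mul_of_nonneg_left hlogle (le_of_lt hκ)
    rw [hB]
    linarith
  -- partial sum bound
  have hS : ∀ n : ℕ, (∑ k ∈ Finset.range (n+1), a k) ≤ κ * (L n - v') + B := by
    intro n
    by_cases hn : z' ≤ (n:ℝ)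
    · have hn2 : (2:ℝ) ≤ n := le_trans hz2 hn
      have hnpos : (0:ℝ) < n := by linarith
      have hceil : ⌈(n:ℝ) + 1/2⌉₊ = n + 1 := by
        rw [Nat.ceil_eq_iff (by omega)]
        constructor
        · push_cast; linarith
        · push_cast; linarith
      have h2 := hΩ2 z' ((n:ℝ)+1/2) hz2 (by linarith)
      rw [hceil] at h2
      have hle : (∑ k ∈ Finset.range (n+1), a k) ≤
          ∑ q ∈ Finset.range (n+1),
            (if q.Prime ∧ z' ≤ (q:ℝ) ∧ (q:ℝ) < (n:ℝ)+1/2 then ζ q * Real.log q / q else 0) := by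
        apply Finset.sum_le_sum
        intro k hk
        have hkn : (k:ℝ) ≤ (n:ℝ) := by
          exact_mod_cast Nat.lt_succ_iff.mp (Finset.mem_range.mp hk)
        rw [haval]
        by_cases hc : k.Prime ∧ z' ≤ (k:ℝ) ∧ (k:ℝ) < z
        · rw [if_pos hc, if_pos ⟨hc.1, hc.2.1, by linarith⟩]
        · rw [if_neg hc]
          split_ifs with h
          · exact hterm k h.1
          · exact le_rfl
      have hlog : Real.log ((n:ℝ)+1/2) ≤ L n + 1 := by
        have hle2 : ((n:ℝ)+1/2) ≤ (n:ℝ) * Real.exp 1 := by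
          have := Real.add_one_le_exp 1
          nlinarith
        calc Real.log ((n:ℝ)+1/2) ≤ Real.log ((n:ℝ) * Real.exp 1) :=
              Real.log_le_log (by positivity) hle2
          _ = Real.log n + 1 := by
              rw [Real.log_mul (ne_of_gt hnpos) (Real.exp_ne_zero 1), Real.log_exp]
          _ ≤ L n + 1 := by linarith [hLlog n]
      have hdiv : Real.log (((n:ℝ)+1/2)/z') = Real.log ((n:ℝ)+1/2) - v' := by
        rw [Real.log_div (by linarith) (ne_of_gt hz'pos), hv']
      have hmul := mul_le_mul_of_nonneg_left hlog (le_of_lt hκ)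
      calc (∑ k ∈ Finset.range (n+1), a k)
          ≤ κ * Real.log (((n:ℝ)+1/2)/z') + A₂ := le_trans hle h2
        _ ≤ κ * (L n - v') + B := by
            rw [hdiv, hB]
            nlinarith [hmul]
    · have hz0 : ∀ k ∈ Finset.range (n+1), a k = 0 := by
        intro k hk
        have hkn : (k:ℝ) ≤ (n:ℝ) := by
          exact_mod_cast Nat.lt_succ_iff.mp (Finset.mem_range.mp hk)
        push_neg at hn
        rw [haval, if_neg]
        rintro ⟨-, h1, -⟩
        linarith
      rw [Finset.sum_eq_zero hz0]
      have h1 := hLv' n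
      nlinarith
  -- general Abel bound
  have habel : ∀ c : ℕ → ℝ, (∀ n, c (n+1) ≤ c n) → (∀ n, 0 ≤ c n) →
      ∑ n ∈ Finset.range N, a n * c n ≤
        (∑ n ∈ Finset.range N, (κ * (L n - v') + B) * (c n - c (n+1)))
          + (κ * (L (N-1) - v') + B) * c N := by
    intro c hc hc0
    rw [abel_identity]
    apply add_le_add
    · apply Finset.sum_le_sum
      intro n _
      exact mul_le_mul_of_nonneg_right (hS n) (by linarith [hc n])
    · apply mul_le_mul_of_nonneg_right _ (hc0 N)
      have hNe : N - 1 + 1 = N := Nat.succ_pred_eq_of_pos hN0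
      calc (∑ k ∈ Finset.range N, a k) = ∑ k ∈ Finset.range (N-1+1), a k := by rw [hNe]
        _ ≤ κ * (L (N-1) - v') + B := hS (N-1)
  -- telescoping potential
  obtain ⟨ψ, hψdef⟩ : ∃ f : ℕ → ℝ, f = fun n => Real.log (L n) + v' * b n := ⟨_, rfl⟩
  have hψval : ∀ n : ℕ, ψ n = Real.log (L n) + v' * b n := by intro n; rw [hψdef]
  have hL0 : L 0 = v' := by
    rw [hLval]
    simp only [Nat.cast_zero, Real.log_zero]
    exact max_eq_right (le_of_lt hv'pos)
  have hb0 : b 0 = 1 / v' := by rw [hbval, hL0]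
  have hLN2V : L N ≤ 2 * V := by
    rw [hLval]
    apply max_le
    · have hceil : (N:ℝ) < z + 1 := by
        rw [hNdef]; exact Nat.ceil_lt_add_one (le_of_lt hzpos)
      have h1 : (N:ℝ) ≤ z^2 := by nlinarith
      have hNpos : (0:ℝ) < N := by exact_mod_cast hN0
      calc Real.log N ≤ Real.log (z^2) := Real.log_le_log hNpos h1
        _ = 2 * V := by rw [Real.log_pow, hV]; norm_num
    · linarith
  -- first Abel estimate
  have hT1 : ∑ n ∈ Finset.range N, a n * b n ≤ κ * (Real.log 2 + Real.log (V / v')) + 2 * B := by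
    have h1 := habel b hbanti (fun n => le_of_lt (hbpos n))
    have h2 : (∑ n ∈ Finset.range N, (κ * (L n - v') + B) * (b n - b (n+1))) ≤
        ∑ n ∈ Finset.range N, (κ * (ψ (n+1) - ψ n) + B * (b n - b (n+1))) := by
      apply Finset.sum_le_sum
      intro n _
      rw [hψval (n+1), hψval n, hbval n, hbval (n+1)]
      exact per1' κ B v' (L n) (L (n+1)) (le_of_lt hκ) (le_of_lt hBpos) hv'pos
        (hLv' n) (hLmono n (n+1) (Nat.le_succ n))
    have h3 : (∑ n ∈ Finset.range N, (κ * (ψ (n+1) - ψ n) + B * (b n - b (n+1))))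
        = κ * (ψ N - ψ 0) + B * (b 0 - b N) := by
      rw [Finset.sum_add_distrib, ← Finset.mul_sum, ← Finset.mul_sum,
        Finset.sum_range_sub ψ, Finset.sum_range_sub' b]
    have hψ0 : ψ 0 = Real.log v' + 1 := by
      rw [hψval 0, hL0, hb0]
      field_simp
    have hboundary : (κ * (L (N-1) - v') + B) * b N ≤ κ * (1 - v' * b N) + B * b N := by
      have hLe : L (N-1) ≤ L N := hLmono _ _ (Nat.sub_le N 1)
      have h4 : (κ * (L (N-1) - v') + B) * b N ≤ (κ * (L N - v') + B) * b N := by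
        apply mul_le_mul_of_nonneg_right _ (le_of_lt (hbpos N))
        have := mul_le_mul_of_nonneg_left (show L (N-1) - v' ≤ L N - v' by linarith)
          (le_of_lt hκ)
        linarith
      have h5 : (κ * (L N - v') + B) * b N = κ * (1 - v' * b N) + B * b N := by
        rw [hbval N]
        exact bnd1 κ B v' (L N) hv'pos (hLv' N)
      linarith
    have hble0 : b 0 ≤ 2 := hble 0
    have hlogLN : Real.log (L N) ≤ Real.log 2 + Real.log V :=
      calc Real.log (L N) ≤ Real.log (2*V) := Real.log_le_log (hLpos N) hLN2V
        _ = Real.log 2 + Real.log V := Real.log_mul two_ne_zero (ne_of_gt hVpos)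
    have hlogdiv : Real.log (V / v') = Real.log V - Real.log v' :=
      Real.log_div (ne_of_gt hVpos) (ne_of_gt hv'pos)
    have hmul := mul_le_mul_of_nonneg_left
      (show Real.log (L N) - Real.log v' ≤ Real.log 2 + Real.log (V/v') by
        rw [hlogdiv]; linarith) (le_of_lt hκ)
    have hBb0 : B * b 0 ≤ B * 2 := mul_le_mul_of_nonneg_left hble0 (le_of_lt hBpos)
    calc ∑ n ∈ Finset.range N, a n * b n
        ≤ (∑ n ∈ Finset.range N, (κ * (L n - v') + B) * (b n - b (n+1)))
            + (κ * (L (N-1) - v') + B) * b N := h1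
      _ ≤ (κ * (ψ N - ψ 0) + B * (b 0 - b N)) + (κ * (1 - v' * b N) + B * b N) := by
          rw [← h3]; exact add_le_add h2 hboundary
      _ = κ * (Real.log (L N) - Real.log v') + B * b 0 := by
          rw [hψval N, hψ0]; ring
      _ ≤ κ * (Real.log 2 + Real.log (V/v')) + 2*B := by linarith
  -- second Abel estimate
  have hT2 : ∑ n ∈ Finset.range N, a n * (b n)^2 ≤ 6*κ + 8*B := by
    have hc : ∀ n, (b (n+1))^2 ≤ (b n)^2 := fun n =>
      pow_le_pow_left₀ (le_of_lt (hbpos (n+1))) (hbanti n) 2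
    have hc0 : ∀ n : ℕ, 0 ≤ (b n)^2 := fun n => sq_nonneg _
    have h1 := habel (fun n => (b n)^2) hc hc0
    have h2 : (∑ n ∈ Finset.range N, (κ * (L n - v') + B) * ((b n)^2 - (b (n+1))^2)) ≤
        ∑ n ∈ Finset.range N, (2*κ * (b n - b (n+1)) + B * ((b n)^2 - (b (n+1))^2)) := by
      apply Finset.sum_le_sum
      intro n _
      rw [hbval n, hbval (n+1)]
      exact per2' κ B v' (L n) (L (n+1)) (le_of_lt hκ) (le_of_lt hBpos) hv'pos
        (hLv' n) (hLmono n (n+1) (Nat.le_succ n))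
    have h3 : (∑ n ∈ Finset.range N, (2*κ * (b n - b (n+1)) + B * ((b n)^2 - (b (n+1))^2)))
        = 2*κ * (b 0 - b N) + B * ((b 0)^2 - (b N)^2) := by
      rw [Finset.sum_add_distrib, ← Finset.mul_sum, ← Finset.mul_sum,
        Finset.sum_range_sub' b, Finset.sum_range_sub' (fun n => (b n)^2)]
    have hboundary2 : (κ * (L (N-1) - v') + B) * (b N)^2 ≤ 2*κ + 4*B := by
      have h4 : κ * (L (N-1) - v') + B ≤ κ * (L N - v') + B := by
        have := mul_le_mul_of_nonneg_left
          (show L (N-1) - v' ≤ L N - v' from by linarith [hLmono (N-1) N (Nat.sub_le N 1)])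
          (le_of_lt hκ)
        linarith
      have hs2 : 1 / L N ≤ 2 := by rw [← hbval N]; exact hble N
      calc (κ * (L (N-1) - v') + B) * (b N)^2
          ≤ (κ * (L N - v') + B) * (b N)^2 := mul_le_mul_of_nonneg_right h4 (sq_nonneg _)
        _ = (κ * (L N - v') + B) * (1 / L N)^2 := by rw [hbval N]
        _ ≤ 2*κ + 4*B := bnd2 κ B v' (L N) (le_of_lt hκ) (le_of_lt hBpos) hv'pos
              (hLv' N) hs2
    have hsq0 : (b 0)^2 ≤ 4 := by
      calc (b 0)^2 ≤ 2^2 := pow_le_pow_left₀ (le_of_lt (hbpos 0)) (hble 0) 2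
        _ = 4 := by norm_num
    have q1 : 2*κ*(b 0 - b N) ≤ 2*κ*2 :=
      mul_le_mul_of_nonneg_left (by linarith [hbpos N, hble 0]) (by linarith)
    have q2 : B*((b 0)^2 - (b N)^2) ≤ B*4 :=
      mul_le_mul_of_nonneg_left (by linarith [sq_nonneg (b N)]) (le_of_lt hBpos)
    calc ∑ n ∈ Finset.range N, a n * (b n)^2
        ≤ (∑ n ∈ Finset.range N, (κ * (L n - v') + B) * ((b n)^2 - (b (n+1))^2))
            + (κ * (L (N-1) - v') + B) * (b N)^2 := h1
      _ ≤ (2*κ * (b 0 - b N) + B * ((b 0)^2 - (b N)^2)) + (2*κ + 4*B) := by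
          rw [← h3]; exact add_le_add h2 hboundary2
      _ ≤ 6*κ + 8*B := by linarith
  -- pointwise comparison of the density sum with the Abel sums
  obtain ⟨g, hgdef⟩ : ∃ f : ℕ → ℝ, f = fun p : ℕ =>
      if p.Prime ∧ z' ≤ (p:ℝ) ∧ (p:ℝ) < z ∧ p ∈ P then 1 - ζ p / p else 1 := ⟨_, rfl⟩
  have hgval : ∀ p : ℕ, g p =
      if p.Prime ∧ z' ≤ (p:ℝ) ∧ (p:ℝ) < z ∧ p ∈ P then 1 - ζ p / p else 1 := by
    intro p; rw [hgdef]
  obtain ⟨hh, hhdef⟩ : ∃ f : ℕ → ℝ, f = fun p : ℕ =>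
      if p.Prime ∧ z' ≤ (p:ℝ) ∧ (p:ℝ) < z ∧ p ∈ P then ζ p / p + A₁ * (ζ p / p)^2 else 0 :=
    ⟨_, rfl⟩
  have hhval : ∀ p : ℕ, hh p =
      if p.Prime ∧ z' ≤ (p:ℝ) ∧ (p:ℝ) < z ∧ p ∈ P then ζ p / p + A₁ * (ζ p / p)^2 else 0 := by
    intro p; rw [hhdef]
  have hh_le : ∀ p : ℕ, hh p ≤ a p * b p + (A₁ * B) * (a p * (b p)^2) := by
    intro p
    rw [hhval]
    split_ifs with hc
    · obtain ⟨hp, hpz', hpz, hpP⟩ := hc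
      have hp2 : (2:ℝ) ≤ (p:ℝ) := by exact_mod_cast hp.two_le
      have hppos : (0:ℝ) < p := by linarith
      have hlogp : v' ≤ Real.log p := by
        rw [hv']; exact Real.log_le_log hz'pos hpz'
      have hLp : L p = Real.log p := by rw [hLval]; exact max_eq_left hlogp
      have hlpos : 0 < Real.log p := lt_of_lt_of_le hv'pos hlogp
      have hap : a p = ζ p * Real.log p / p := by
        rw [haval, if_pos ⟨hp, hpz', hpz⟩]
      have hbp : b p = 1 / Real.log p := by rw [hbval, hLp]
      have hx0 := (hx p hp).1
      have habp : a p * b p = ζ p / p := by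
        rw [hap, hbp]
        field_simp
      have habp2 : a p * (b p)^2 = (ζ p / p) * (1 / Real.log p) := by
        rw [hap, hbp]
        field_simp
      rw [habp, habp2]
      have hxl : ζ p / p * Real.log p ≤ B := by
        rw [div_mul_eq_mul_div]
        exact haB p hp
      have key := density_sq B (Real.log p) (ζ p / p) hlpos hx0 hxl
      have key2 := mul_le_mul_of_nonneg_left key (show (0:ℝ) ≤ A₁ by linarith)
      linarith
    · have h1 : 0 ≤ a p * b p := mul_nonneg (ha0 p) (le_of_lt (hbpos p))
      have h2 : 0 ≤ a p * (b p)^2 := mul_nonneg (ha0 p) (sq_nonneg _)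
      have h3 : (0:ℝ) ≤ A₁ * B := by positivity
      nlinarith
  have hSig : ∑ p ∈ Finset.range N, hh p ≤ κ * Real.log (V/v') + D := by
    have h1 : ∑ p ∈ Finset.range N, hh p ≤
        ∑ p ∈ Finset.range N, (a p * b p + (A₁*B) * (a p * (b p)^2)) :=
      Finset.sum_le_sum (fun p _ => hh_le p)
    rw [Finset.sum_add_distrib, ← Finset.mul_sum] at h1
    have hA₁B : (0:ℝ) ≤ A₁ * B := by positivity
    have h2 := mul_le_mul_of_nonneg_left hT2 hA₁B
    rw [hD]
    linarith
  -- from sums to products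
  have hgexp : ∀ p ∈ Finset.range N, Real.exp (-(hh p)) ≤ g p := by
    intro p _
    rw [hhval, hgval]
    split_ifs with hc
    · exact exp_bound_quad A₁ (ζ p / p) hA₁ (hx p hc.1).1 (hx p hc.1).2
    · rw [neg_zero, Real.exp_zero]
  have hprodg : Real.exp (-(κ * Real.log (V/v') + D)) ≤ ∏ p ∈ Finset.range N, g p := by
    have h1 : ∏ p ∈ Finset.range N, Real.exp (-(hh p)) ≤ ∏ p ∈ Finset.range N, g p :=
      Finset.prod_le_prod (fun p _ => (Real.exp_pos _).le) hgexp
    rw [← Real.exp_sum] at h1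
    refine le_trans (Real.exp_le_exp.mpr ?_) h1
    have hsn : ∑ p ∈ Finset.range N, -(hh p) = -∑ p ∈ Finset.range N, hh p := by
      rw [Finset.sum_neg_distrib]
    rw [hsn]
    linarith [hSig]
  -- product splitting
  have hsub : Finset.range ⌈z'⌉₊ ⊆ Finset.range N := by
    apply Finset.range_subset_range.2
    rw [hNdef]
    exact Nat.ceil_le_ceil (le_of_lt hzz)
  have hprodF' : (∏ p ∈ Finset.range ⌈z'⌉₊,
        if p.Prime ∧ (p:ℝ) < z' ∧ p ∈ P then 1 - ζ p / p else 1)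
      = ∏ p ∈ Finset.range N, if p.Prime ∧ (p:ℝ) < z' ∧ p ∈ P then 1 - ζ p / p else 1 := by
    apply Finset.prod_subset hsub
    intro p _ hp
    rw [if_neg]
    rintro ⟨-, hlt, -⟩
    exact hp (Finset.mem_range.2 (Nat.lt_ceil.2 hlt))
  have hsplitp : ∀ p : ℕ, (if p.Prime ∧ (p:ℝ) < z ∧ p ∈ P then 1 - ζ p / p else 1)
      = (if p.Prime ∧ (p:ℝ) < z' ∧ p ∈ P then 1 - ζ p / p else 1) * g p := by
    intro p
    rw [hgval]
    by_cases hc1 : (p:ℝ) < z'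
    · have hC2 : ¬(p.Prime ∧ z' ≤ (p:ℝ) ∧ (p:ℝ) < z ∧ p ∈ P) := by
        rintro ⟨-, hge, -, -⟩; linarith
      rw [if_neg hC2, mul_one]
      by_cases hc2 : p.Prime ∧ p ∈ P
      · rw [if_pos ⟨hc2.1, lt_trans hc1 hzz, hc2.2⟩, if_pos ⟨hc2.1, hc1, hc2.2⟩]
      · have hC3 : ¬(p.Prime ∧ (p:ℝ) < z ∧ p ∈ P) := by
          rintro ⟨hp, -, hP⟩; exact hc2 ⟨hp, hP⟩
        have hC1 : ¬(p.Prime ∧ (p:ℝ) < z' ∧ p ∈ P) := by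
          rintro ⟨hp, -, hP⟩; exact hc2 ⟨hp, hP⟩
        rw [if_neg hC3, if_neg hC1]
    · have hge : z' ≤ (p:ℝ) := le_of_not_gt hc1
      have hC1 : ¬(p.Prime ∧ (p:ℝ) < z' ∧ p ∈ P) := by
        rintro ⟨-, hlt, -⟩; linarith
      rw [if_neg hC1, one_mul]
      by_cases hc2 : p.Prime ∧ (p:ℝ) < z ∧ p ∈ P
      · rw [if_pos hc2, if_pos ⟨hc2.1, hge, hc2.2.1, hc2.2.2⟩]
      · have hC2 : ¬(p.Prime ∧ z' ≤ (p:ℝ) ∧ (p:ℝ) < z ∧ p ∈ P) := by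
          rintro ⟨hp, -, hlt, hP⟩; exact hc2 ⟨hp, hlt, hP⟩
        rw [if_neg hc2, if_neg hC2]
  have hsplit : (∏ p ∈ Finset.range N, if p.Prime ∧ (p:ℝ) < z ∧ p ∈ P then 1 - ζ p / p else 1)
      = (∏ p ∈ Finset.range N, if p.Prime ∧ (p:ℝ) < z' ∧ p ∈ P then 1 - ζ p / p else 1)
        * ∏ p ∈ Finset.range N, g p := by
    rw [← Finset.prod_mul_distrib]
    exact Finset.prod_congr rfl (fun p _ => hsplitp p)
  have hF'nonneg : 0 ≤ ∏ p ∈ Finset.range N,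
      if p.Prime ∧ (p:ℝ) < z' ∧ p ∈ P then 1 - ζ p / p else 1 := by
    apply Finset.prod_nonneg
    intro p _
    split_ifs with hc
    · have h1 := (hx p hc.1).2
      have hA₁pos : (0:ℝ) < A₁ := by linarith
      have h2 : (0:ℝ) < 1/A₁ := by positivity
      linarith
    · norm_num
  have hone : 1 ≤ Real.exp D * (V/v')^κ * ∏ p ∈ Finset.range N, g p := by
    have hrpow : (V/v')^κ = Real.exp (Real.log (V/v') * κ) :=
      Real.rpow_def_of_pos (by positivity) κ
    calc (1:ℝ)
        = Real.exp D * Real.exp (Real.log (V/v') * κ)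
            * Real.exp (-(κ * Real.log (V/v') + D)) := by
          rw [← Real.exp_add, ← Real.exp_add,
            show D + Real.log (V/v') * κ + -(κ * Real.log (V/v') + D) = 0 by ring,
            Real.exp_zero]
      _ ≤ Real.exp D * (V/v')^κ * ∏ p ∈ Finset.range N, g p := by
          rw [hrpow]
          exact mul_le_mul_of_nonneg_left hprodg (by positivity)
  rw [hprodF', hsplit]
  calc (∏ p ∈ Finset.range N, if p.Prime ∧ (p:ℝ) < z' ∧ p ∈ P then 1 - ζ p / p else 1)
      = (∏ p ∈ Finset.range N, if p.Prime ∧ (p:ℝ) < z' ∧ p ∈ P then 1 - ζ p / p else 1) * 1 :=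
        (mul_one _).symm
    _ ≤ (∏ p ∈ Finset.range N, if p.Prime ∧ (p:ℝ) < z' ∧ p ∈ P then 1 - ζ p / p else 1)
          * (Real.exp D * (V/v')^κ * ∏ p ∈ Finset.range N, g p) :=
        mul_le_mul_of_nonneg_left hone hF'nonneg
    _ = Real.exp D * (V/v')^κ
          * ((∏ p ∈ Finset.range N, if p.Prime ∧ (p:ℝ) < z' ∧ p ∈ P then 1 - ζ p / p else 1)
              * ∏ p ∈ Finset.range N, g p) := by ring
end
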